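/- Let x ≥ 1 be a real number and let n ≥ 1 be an integer, and suppose that ℓ_{⌊x⌋+1} > n. Then ξ_{x,n} − (1/2)·ξ_{x,n}² ≤ τ_n ≤ ξ_{x,n} + x/n. -/

import Mathlib

open scoped BigOperators

/-- The sets `ℒ_m` of the lucky-number sieve. `luckySet 0` is a junk value. -/
noncomputable def luckySet : ℕ → Set ℕ
  | 0 => Set.univ
  | 1 => {k | 1 ≤ k}
  | 2 => {2} ∪ {k | 3 ≤ k ∧ Odd k}
  | m + 3 =>
      {x | ∃ n : ℕ, 1 ≤ n ∧ ¬ (Nat.nth (· ∈ luckySet (m + 2)) (m + 1) ∣ n) ∧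
        x = Nat.nth (· ∈ luckySet (m + 2)) (n - 1)}

/-- `ℓ_{m,n}`: the `n`-th element (1-indexed) of `ℒ_m` in increasing order. -/
noncomputable def luckyEll (m n : ℕ) : ℕ := Nat.nth (· ∈ luckySet m) (n - 1)

/-- The `n`-th lucky number: `ℓ_1 = 2` and `ℓ_n = ℓ_{n,n}` for `n ≥ 2`. -/
noncomputable def lucky : ℕ → ℕ
  | 1 => 2
  | n => luckyEll n n

/-- `L_n(x) = #(ℒ_n ∩ [1, x])`. -/
noncomputable def luckyCount (n : ℕ) (x : ℝ) : ℕ :=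
  {k : ℕ | k ∈ luckySet n ∧ 1 ≤ k ∧ (k : ℝ) ≤ x}.ncard

/-- `ρ_m = ∏_{i=1}^{m-1} (1 - 1/ℓ_i)⁻¹`. -/
noncomputable def luckyRho (m : ℕ) : ℝ :=
  ∏ i ∈ Finset.Icc 1 (m - 1), ((1 : ℝ) - 1 / (lucky i : ℝ))⁻¹

/-- `τ_{m,n} = (1/n) ∑_{i=1}^{m-1} (ρ_{i+1}/ρ_m) {L_i(ℓ_{m,n})/ℓ_i}`. -/
noncomputable def luckyTau2 (m n : ℕ) : ℝ :=
  (1 / (n : ℝ)) * ∑ i ∈ Finset.Icc 1 (m - 1),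
    (luckyRho (i + 1) / luckyRho m) *
      Int.fract ((luckyCount i (luckyEll m n : ℝ) : ℝ) / (lucky i : ℝ))

/-- `τ_m = τ_{m,m}`. -/
noncomputable def luckyTau (m : ℕ) : ℝ := luckyTau2 m m

/-- `ϱ_m = ρ_m - 1 - ∑_{k=1}^{m-1} 1/k`. -/
noncomputable def luckyVarrho (m : ℕ) : ℝ :=
  luckyRho m - 1 - ∑ k ∈ Finset.Icc 1 (m - 1), (1 : ℝ) / (k : ℝ)

/-- `ξ_{x,y} = ∑_{x < i < y} 1/ℓ_i`. -/
noncomputable def luckyXi (x y : ℝ) : ℝ :=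
  ∑ i ∈ Finset.Ioo ⌊x⌋₊ ⌈y⌉₊, 1 / (lucky i : ℝ)

section Infra

lemma mem_lucky2_two_le {k : ℕ} (hk : k ∈ luckySet 2) : 2 ≤ k := by
  rcases hk with h | ⟨h, _⟩
  · simp only [Set.mem_singleton_iff] at h; omega
  · omega

lemma lucky2_infinite : (setOf (· ∈ luckySet 2)).Infinite := by
  apply Set.infinite_of_injective_forall_mem (f := fun k : ℕ => 2 * k + 3)
  · intro a b hab; simpa using hab
  · intro k
    refine Set.mem_union_right _ ⟨by omega, ⟨k + 1, by ring⟩⟩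

lemma luckySet_succ_def (m : ℕ) :
    luckySet (m + 3) =
      {x | ∃ n : ℕ, 1 ≤ n ∧ ¬ (Nat.nth (· ∈ luckySet (m + 2)) (m + 1) ∣ n) ∧
        x = Nat.nth (· ∈ luckySet (m + 2)) (n - 1)} := rfl

lemma lucky_infinite_sub : ∀ m : ℕ,
    (setOf (· ∈ luckySet (m + 2))).Infinite ∧ luckySet (m + 2) ⊆ luckySet 2 := by
  intro m
  induction m with
  | zero => exact ⟨lucky2_infinite, fun x hx => hx⟩
  | succ k ih =>
    obtain ⟨hinf, hsub⟩ := ih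
    have hmem : ∀ x ∈ luckySet (k + 3), x ∈ luckySet (k + 2) := by
      intro x hx
      rcases hx with ⟨n, hn1, hnd, rfl⟩
      exact Nat.nth_mem_of_infinite hinf _
    refine ⟨?_, fun x hx => hsub (hmem x hx)⟩
    set d := Nat.nth (· ∈ luckySet (k + 2)) (k + 1) with hd
    have hd2 : 2 ≤ d := mem_lucky2_two_le (hsub (Nat.nth_mem_of_infinite hinf (k + 1)))
    apply Set.infinite_of_injective_forall_mem
      (f := fun j : ℕ => Nat.nth (· ∈ luckySet (k + 2)) (j * d + 1 - 1))
    · intro a b hab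
      have h1 := Nat.nth_injective hinf hab
      have h2 : a * d = b * d := by omega
      exact Nat.eq_of_mul_eq_mul_right (by omega) h2
    · intro j
      refine ⟨j * d + 1, by omega, ?_, rfl⟩
      intro hdvd
      have h1 : d ∣ 1 := (Nat.dvd_add_right (dvd_mul_left d j)).mp hdvd
      exact absurd (Nat.le_of_dvd one_pos h1) (by omega)

lemma luckySet_infinite {m : ℕ} (hm : 2 ≤ m) : (setOf (· ∈ luckySet m)).Infinite := by
  obtain ⟨k, rfl⟩ : ∃ k, m = k + 2 := ⟨m - 2, by omega⟩
  exact (lucky_infinite_sub k).1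

lemma luckySet_sub_two {m : ℕ} (hm : 2 ≤ m) : luckySet m ⊆ luckySet 2 := by
  obtain ⟨k, rfl⟩ : ∃ k, m = k + 2 := ⟨m - 2, by omega⟩
  exact (lucky_infinite_sub k).2

lemma lucky_def {m : ℕ} (hm : 2 ≤ m) :
    lucky m = Nat.nth (· ∈ luckySet m) (m - 1) := by
  obtain ⟨k, rfl⟩ : ∃ k, m = k + 2 := ⟨m - 2, by omega⟩
  rfl

lemma lucky_two_le {m : ℕ} (hm : 1 ≤ m) : 2 ≤ lucky m := by
  rcases Nat.lt_or_ge m 2 with h | h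
  · interval_cases m; rfl
  · rw [lucky_def h]
    exact mem_lucky2_two_le (luckySet_sub_two h
      (Nat.nth_mem_of_infinite (luckySet_infinite h) _))

end Infra
section Step

open Classical in
lemma count_congr_below {p q : ℕ → Prop} {B : ℕ} (h : ∀ y, y < B → (p y ↔ q y)) :
    Nat.count p B = Nat.count q B := by
  classical
  rw [Nat.count_eq_card_filter_range, Nat.count_eq_card_filter_range]
  apply Finset.card_bij (fun a _ => a) <;> simp_all [Finset.mem_filter]

lemma ell_step {m : ℕ} (hm : 2 ≤ m) {k : ℕ} (hk1 : 1 ≤ k) (hk : k < lucky m) :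
    luckyEll (m + 1) k = luckyEll m k := by
  classical
  obtain ⟨j, rfl⟩ : ∃ j, m = j + 2 := ⟨m - 2, by omega⟩
  set p : ℕ → Prop := (· ∈ luckySet (j + 2)) with hp
  set q : ℕ → Prop := (· ∈ luckySet (j + 3)) with hq
  have hinf : (setOf p).Infinite := luckySet_infinite (by omega)
  set d := Nat.nth p (j + 1) with hd
  have hdl : lucky (j + 2) = d := lucky_def (by omega)
  have hqdef : ∀ x, q x ↔ ∃ n : ℕ, 1 ≤ n ∧ ¬ d ∣ n ∧ x = Nat.nth p (n - 1) := by
    intro x; rfl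
  set B := Nat.nth p (k - 1) with hB
  have hqB : q B := by
    rw [hqdef]
    exact ⟨k, hk1, fun hdvd => absurd (Nat.le_of_dvd (by omega) hdvd) (by omega), rfl⟩
  have hiff : ∀ y, y < B → (q y ↔ p y) := by
    intro y hy
    constructor
    · intro hqy
      rw [hqdef] at hqy
      obtain ⟨n, _, _, rfl⟩ := hqy
      exact Nat.nth_mem_of_infinite hinf _
    · intro hpy
      have hy' : Nat.nth p (Nat.count p y) = y := Nat.nth_count hpy
      have hlt : Nat.count p y < k - 1 := by
        have := (Nat.nth_lt_nth hinf (k := Nat.count p y) (n := k - 1)).mp (by rw [hy']; exact hy)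
        exact this
      rw [hqdef]
      refine ⟨Nat.count p y + 1, by omega, ?_, by simp [hy']⟩
      intro hdvd
      exact absurd (Nat.le_of_dvd (by omega) hdvd) (by omega)
  have hcount : Nat.count q B = k - 1 := by
    rw [count_congr_below (fun y hy => (hiff y hy)), hB, Nat.count_nth_of_infinite hinf]
  have : Nat.nth q (k - 1) = B := by
    rw [← hcount]
    exact Nat.nth_count hqB
  simpa [luckyEll] using this

end Step
section Chain

lemma lucky_chain {i n : ℕ} (hi : 2 ≤ i) (hni : n < lucky i) :
    ∀ m, i ≤ m → m ≤ n →
      (n < lucky m ∧ ∀ k, 1 ≤ k → k ≤ n → luckyEll m k = luckyEll i k) := by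
  intro m hm
  induction m, hm using Nat.le_induction with
  | base => exact fun _ => ⟨hni, fun k _ _ => rfl⟩
  | succ m hm ih =>
    intro hm1n
    obtain ⟨hlm, hell⟩ := ih (by omega)
    have hm2 : 2 ≤ m := le_trans hi hm
    have hinfm : (setOf (· ∈ luckySet m)).Infinite := luckySet_infinite hm2
    constructor
    · have h1 : lucky (m + 1) = luckyEll (m + 1) (m + 1) := lucky_def (by omega)
      have h2 : luckyEll (m + 1) (m + 1) = luckyEll m (m + 1) :=
        ell_step hm2 (by omega) (by omega)
      have h3 : Nat.nth (· ∈ luckySet m) (m - 1) < Nat.nth (· ∈ luckySet m) m :=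
        (Nat.nth_lt_nth hinfm).mpr (by omega)
      have h4 : lucky m = Nat.nth (· ∈ luckySet m) (m - 1) := lucky_def hm2
      have h5 : luckyEll m (m + 1) = Nat.nth (· ∈ luckySet m) m := by
        simp [luckyEll]
      omega
    · intro k hk1 hkn
      rw [ell_step hm2 hk1 (by omega), hell k hk1 hkn]

lemma luckyCount_ell {i n : ℕ} (hi : 2 ≤ i) (hn : 1 ≤ n) :
    luckyCount i (luckyEll i n : ℝ) = n := by
  classical
  set p : ℕ → Prop := (· ∈ luckySet i) with hp
  have hinf : (setOf p).Infinite := luckySet_infinite hi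
  set B := Nat.nth p (n - 1) with hB
  have hEll : luckyEll i n = B := rfl
  have hset : {k : ℕ | k ∈ luckySet i ∧ 1 ≤ k ∧ (k : ℝ) ≤ (luckyEll i n : ℝ)}
      = ↑((Finset.range (B + 1)).filter p) := by
    ext k
    simp only [Set.mem_setOf_eq, Finset.coe_filter, Finset.mem_range, hEll]
    constructor
    · rintro ⟨h1, h2, h3⟩
      have h3' : k ≤ B := by exact_mod_cast h3
      exact ⟨by omega, h1⟩
    · rintro ⟨h1, h2⟩
      refine ⟨h2, ?_, ?_⟩
      · have := mem_lucky2_two_le (luckySet_sub_two hi h2); omega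
      · have : k ≤ B := by omega
        exact_mod_cast this
  rw [luckyCount, hset, Set.ncard_coe_finset, ← Nat.count_eq_card_filter_range,
    Nat.count_succ]
  have hpB : p B := Nat.nth_mem_of_infinite hinf _
  rw [hB, Nat.count_nth_of_infinite hinf, if_pos (hB ▸ hpB)]
  omega

end Chain
section Analytic

lemma prod_one_sub_ge (s : Finset ℕ) (f : ℕ → ℝ) (h0 : ∀ j ∈ s, 0 ≤ f j)
    (h1 : ∀ j ∈ s, f j ≤ 1) :
    1 - ∑ j ∈ s, f j ≤ ∏ j ∈ s, (1 - f j) := by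
  classical
  induction s using Finset.cons_induction with
  | empty => simp
  | cons c s hc ih =>
    rw [Finset.prod_cons, Finset.sum_cons]
    have hc0 : 0 ≤ f c := h0 c (Finset.mem_cons_self c s)
    have hc1 : f c ≤ 1 := h1 c (Finset.mem_cons_self c s)
    have ih' := ih (fun j hj => h0 j (Finset.mem_cons_of_mem hj))
      (fun j hj => h1 j (Finset.mem_cons_of_mem hj))
    have hs0 : 0 ≤ ∑ j ∈ s, f j :=
      Finset.sum_nonneg (fun j hj => h0 j (Finset.mem_cons_of_mem hj))
    nlinarith [Finset.prod_nonneg (fun j (hj : j ∈ s) => sub_nonneg.mpr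
      (h1 j (Finset.mem_cons_of_mem hj)))]

lemma sum_mul_tail_le (a : ℕ) (f : ℕ → ℝ) (hf : ∀ j, 0 ≤ f j) :
    ∀ b : ℕ, ∑ i ∈ Finset.Ioo a b, f i * ∑ j ∈ Finset.Ioo i b, f j ≤
      (∑ i ∈ Finset.Ioo a b, f i) ^ 2 / 2 := by
  intro b
  induction b with
  | zero => simp
  | succ b ih =>
    by_cases hab : a < b
    · have hIoo : ∀ c : ℕ, c < b → Finset.Ioo c (b + 1) = insert b (Finset.Ioo c b) := by
        intro c hc
        ext t
        simp only [Finset.mem_Ioo, Finset.mem_insert]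
        omega
      have hb : b ∉ Finset.Ioo a b := by simp
      rw [hIoo a hab, Finset.sum_insert hb, Finset.sum_insert hb]
      have hsplit : ∀ i ∈ Finset.Ioo a b,
          f i * ∑ j ∈ Finset.Ioo i (b + 1), f j
            = f i * f b + f i * ∑ j ∈ Finset.Ioo i b, f j := by
        intro i hi
        simp only [Finset.mem_Ioo] at hi
        rw [hIoo i hi.2, Finset.sum_insert (by simp), mul_add]
      rw [Finset.sum_congr rfl hsplit, Finset.sum_add_distrib, ← Finset.sum_mul]
      have hempty : Finset.Ioo b (b + 1) = ∅ := by
        ext t; simp only [Finset.mem_Ioo, Finset.notMem_empty, iff_false]; omega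
      rw [hempty]
      have hS : 0 ≤ ∑ i ∈ Finset.Ioo a b, f i := Finset.sum_nonneg fun j _ => hf j
      nlinarith [ih, hf b]
    · have : Finset.Ioo a (b + 1) = ∅ := by
        ext t; simp only [Finset.mem_Ioo, Finset.notMem_empty, iff_false]; omega
      simp [this]

lemma lucky_factor_bounds {j : ℕ} (hj : 1 ≤ j) :
    (0:ℝ) < 1 - 1 / (lucky j : ℝ) ∧ 1 - 1 / (lucky j : ℝ) ≤ 1 := by
  have h2 : (2:ℝ) ≤ (lucky j : ℝ) := by exact_mod_cast lucky_two_le hj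
  have hpos : (0:ℝ) < (lucky j : ℝ) := by linarith
  have h1 : 1 / (lucky j : ℝ) ≤ 1 / 2 := by
    apply div_le_div_of_nonneg_left <;> linarith
  have h0 : 0 < 1 / (lucky j : ℝ) := by positivity
  constructor <;> linarith

lemma rho_ratio {i n : ℕ} (hin : i ≤ n - 1) :
    luckyRho (i + 1) / luckyRho n
      = ∏ j ∈ Finset.Ioc i (n - 1), (1 - 1 / (lucky j : ℝ)) := by
  have hne : ∀ s : Finset ℕ, (∀ j ∈ s, 1 ≤ j) →
      ∏ j ∈ s, ((1:ℝ) - 1 / (lucky j : ℝ))⁻¹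
        = (∏ j ∈ s, ((1:ℝ) - 1 / (lucky j : ℝ)))⁻¹ := by
    intro s _; rw [← Finset.prod_inv_distrib]
  have hIcc : ∀ t : ℕ, Finset.Icc 1 t = Finset.Ioc 0 t := fun t => Finset.Icc_add_one_left_eq_Ioc 0 t
  have key : luckyRho n = luckyRho (i + 1) * ∏ j ∈ Finset.Ioc i (n - 1),
      ((1:ℝ) - 1 / (lucky j : ℝ))⁻¹ := by
    rw [luckyRho, luckyRho, Nat.add_sub_cancel, hIcc, hIcc,
      ← Finset.prod_Ioc_consecutive _ (Nat.zero_le i) hin]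
  have hprodpos : (0:ℝ) < ∏ j ∈ Finset.Ioc i (n - 1), ((1:ℝ) - 1 / (lucky j : ℝ))⁻¹ := by
    apply Finset.prod_pos
    intro j hj
    simp only [Finset.mem_Ioc] at hj
    exact inv_pos.mpr (lucky_factor_bounds (by omega)).1
  have hrhopos : (0:ℝ) < luckyRho (i + 1) := by
    rw [luckyRho]
    apply Finset.prod_pos
    intro j hj
    simp only [Finset.mem_Icc] at hj
    exact inv_pos.mpr (lucky_factor_bounds hj.1).1
  rw [key, hne _ (fun j hj => by simp only [Finset.mem_Ioc] at hj; omega),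
    div_mul_eq_div_div, div_self (ne_of_gt hrhopos), one_div, inv_inv]

end Analytic
theorem tau_xi_estimate (x : ℝ) (hx : 1 ≤ x) (n : ℕ) (hn : 1 ≤ n)
    (h : n < lucky (⌊x⌋₊ + 1)) :
    luckyXi x (n : ℝ) - (1 / 2) * (luckyXi x (n : ℝ)) ^ 2 ≤ luckyTau n ∧
    luckyTau n ≤ luckyXi x (n : ℝ) + x / (n : ℝ) := by
  classical
  set a := ⌊x⌋₊ with ha
  have ha1 : 1 ≤ a := Nat.le_floor (by exact_mod_cast hx)
  have hax : (a : ℝ) ≤ x := Nat.floor_le (by linarith)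
  have hnR : (0:ℝ) < (n : ℝ) := by exact_mod_cast hn
  set F := Finset.Icc 1 (n - 1) with hF
  set B := Finset.Ioo a n with hB
  have hBF : B ⊆ F := by
    intro i hi
    simp only [hB, Finset.mem_Ioo] at hi
    simp only [hF, Finset.mem_Icc]
    omega
  set f : ℕ → ℝ := fun j => 1 / (lucky j : ℝ) with hf
  have hf0 : ∀ j, 0 ≤ f j := fun j => by positivity
  have hceil : ⌈(n:ℝ)⌉₊ = n := Nat.ceil_natCast n
  have hXi : luckyXi x (n : ℝ) = ∑ i ∈ B, f i := by
    rw [luckyXi, hceil]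
  set ξ := ∑ i ∈ B, f i with hξ
  have hξ0 : 0 ≤ ξ := Finset.sum_nonneg fun j _ => hf0 j
  set t : ℕ → ℝ := fun i => (luckyRho (i + 1) / luckyRho n) *
      Int.fract ((luckyCount i (luckyEll n n : ℝ) : ℝ) / (lucky i : ℝ)) with ht
  have hTau : luckyTau n = (1 / (n : ℝ)) * ∑ i ∈ F, t i := rfl
  have hIocIoo : ∀ i : ℕ, Finset.Ioc i (n - 1) = Finset.Ioo i n := by
    intro i; ext j; simp only [Finset.mem_Ioc, Finset.mem_Ioo]; omega
  -- ratio facts for i ∈ F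
  have hratio : ∀ i ∈ F, luckyRho (i + 1) / luckyRho n
      = ∏ j ∈ Finset.Ioo i n, (1 - f j) := by
    intro i hi
    simp only [hF, Finset.mem_Icc] at hi
    rw [rho_ratio (by omega), hIocIoo]
  have hratio0 : ∀ i ∈ F, 0 ≤ luckyRho (i + 1) / luckyRho n := by
    intro i hi
    rw [hratio i hi]
    apply Finset.prod_nonneg
    intro j hj
    simp only [Finset.mem_Ioo] at hj
    have hij : i ∈ F := hi
    simp only [hF, Finset.mem_Icc] at hij
    exact le_of_lt (lucky_factor_bounds (j := j) (by omega)).1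
  have hratio1 : ∀ i ∈ F, luckyRho (i + 1) / luckyRho n ≤ 1 := by
    intro i hi
    rw [hratio i hi]
    apply Finset.prod_le_one
    · intro j hj
      simp only [Finset.mem_Ioo] at hj
      have hij : i ∈ F := hi
      simp only [hF, Finset.mem_Icc] at hij
      exact le_of_lt (lucky_factor_bounds (j := j) (by omega)).1
    · intro j hj
      exact (lucky_factor_bounds (j := j) (by
        simp only [Finset.mem_Ioo] at hj
        have hij : i ∈ F := hi
        simp only [hF, Finset.mem_Icc] at hij
        omega)).2
  have ht0 : ∀ i ∈ F, 0 ≤ t i :=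
    fun i hi => mul_nonneg (hratio0 i hi) (Int.fract_nonneg _)
  have ht1 : ∀ i ∈ F, t i ≤ 1 := by
    intro i hi
    apply mul_le_one₀ (hratio1 i hi) (Int.fract_nonneg _) (le_of_lt (Int.fract_lt_one _))
  -- key computation for i ∈ B
  have hBkey : ∀ i ∈ B, t i = (luckyRho (i + 1) / luckyRho n) * ((n : ℝ) / (lucky i : ℝ))
      ∧ (n : ℝ) < (lucky i : ℝ) := by
    intro i hi
    simp only [hB, Finset.mem_Ioo] at hi
    obtain ⟨hai, hin⟩ := hi
    have hi2 : 2 ≤ i := by omega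
    have ha2 : 2 ≤ a + 1 := by omega
    have hchain_i := lucky_chain ha2 h i (by omega) (by omega)
    have hchain_n := lucky_chain ha2 h n (by omega) (le_refl n)
    have hlucky_i : n < lucky i := hchain_i.1
    have hEll : luckyEll n n = luckyEll i n := by
      rw [hchain_n.2 n hn (le_refl n), ← hchain_i.2 n hn (le_refl n)]
    have hcount : luckyCount i (luckyEll n n : ℝ) = n := by
      rw [hEll]; exact luckyCount_ell hi2 hn
    have hluckyR : (n : ℝ) < (lucky i : ℝ) := by exact_mod_cast hlucky_i
    refine ⟨?_, hluckyR⟩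
    show luckyRho (i + 1) / luckyRho n *
        Int.fract ((luckyCount i (luckyEll n n : ℝ) : ℝ) / (lucky i : ℝ)) = _
    rw [hcount, Int.fract_eq_self.mpr ⟨by positivity, by
      rw [div_lt_one (by exact_mod_cast Nat.lt_of_lt_of_le Nat.zero_lt_one (lucky_two_le (by omega) |>.trans' (by omega)))]
      exact hluckyR⟩]
  -- upper bound pieces
  have hcardA : ((F \ B).card : ℝ) ≤ (a : ℝ) := by
    have hsub : F \ B ⊆ Finset.Icc 1 a := by
      intro i hi
      simp only [Finset.mem_sdiff, hF, hB, Finset.mem_Icc, Finset.mem_Ioo] at hi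
      simp only [Finset.mem_Icc]
      omega
    have := Finset.card_le_card hsub
    have hcard : (Finset.Icc 1 a).card = a := by rw [Nat.card_Icc]; omega
    exact_mod_cast le_trans this (le_of_eq hcard)
  have hsplit : ∑ i ∈ F, t i = ∑ i ∈ F \ B, t i + ∑ i ∈ B, t i :=
    (Finset.sum_sdiff hBF).symm
  have hupperA : ∑ i ∈ F \ B, t i ≤ (a : ℝ) := by
    calc ∑ i ∈ F \ B, t i ≤ ∑ i ∈ F \ B, (1:ℝ) :=
          Finset.sum_le_sum fun i hi => ht1 i (Finset.mem_sdiff.mp hi).1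
      _ = ((F \ B).card : ℝ) := by simp
      _ ≤ (a : ℝ) := hcardA
  have hupperB : ∑ i ∈ B, t i ≤ (n : ℝ) * ξ := by
    rw [hξ, Finset.mul_sum]
    apply Finset.sum_le_sum
    intro i hi
    obtain ⟨hteq, hlt⟩ := hBkey i hi
    rw [hteq, hf]
    have h1 : (luckyRho (i + 1) / luckyRho n) ≤ 1 := hratio1 i (hBF hi)
    have h2 : (0:ℝ) ≤ (n : ℝ) / (lucky i : ℝ) := by positivity
    calc (luckyRho (i + 1) / luckyRho n) * ((n : ℝ) / (lucky i : ℝ))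
        ≤ 1 * ((n : ℝ) / (lucky i : ℝ)) := mul_le_mul_of_nonneg_right h1 h2
      _ = (n : ℝ) * (1 / (lucky i : ℝ)) := by ring
  -- lower bound pieces
  have hlowerB : (n : ℝ) * ξ - (n : ℝ) * (ξ ^ 2 / 2) ≤ ∑ i ∈ B, t i := by
    have hterm : ∀ i ∈ B, (n : ℝ) * (f i - f i * ∑ j ∈ Finset.Ioo i n, f j) ≤ t i := by
      intro i hi
      obtain ⟨hteq, hlt⟩ := hBkey i hi
      rw [hteq, hratio i (hBF hi)]
      have hmem := Finset.mem_Ioo.mp (by simpa [hB] using hi)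
      have hprodge : 1 - ∑ j ∈ Finset.Ioo i n, f j ≤ ∏ j ∈ Finset.Ioo i n, (1 - f j) := by
        apply prod_one_sub_ge
        · intro j _; exact hf0 j
        · intro j hj
          simp only [Finset.mem_Ioo] at hj
          have := (lucky_factor_bounds (j := j) (by omega)).1
          linarith
      have hfi0 : (0:ℝ) ≤ (n : ℝ) / (lucky i : ℝ) := by positivity
      have : (1 - ∑ j ∈ Finset.Ioo i n, f j) * ((n : ℝ) / (lucky i : ℝ))
          ≤ (∏ j ∈ Finset.Ioo i n, (1 - f j)) * ((n : ℝ) / (lucky i : ℝ)) :=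
        mul_le_mul_of_nonneg_right hprodge hfi0
      calc (n : ℝ) * (f i - f i * ∑ j ∈ Finset.Ioo i n, f j)
          = (1 - ∑ j ∈ Finset.Ioo i n, f j) * ((n : ℝ) / (lucky i : ℝ)) := by
            rw [hf]; ring
        _ ≤ _ := this
    calc (n : ℝ) * ξ - (n : ℝ) * (ξ ^ 2 / 2)
        ≤ (n : ℝ) * ξ - (n : ℝ) * ∑ i ∈ B, f i * ∑ j ∈ Finset.Ioo i n, f j := by
          have hkey := sum_mul_tail_le a f hf0 n
          nlinarith
      _ = ∑ i ∈ B, (n : ℝ) * (f i - f i * ∑ j ∈ Finset.Ioo i n, f j) := by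
          rw [hξ, Finset.mul_sum, Finset.mul_sum, ← Finset.sum_sub_distrib]
          apply Finset.sum_congr rfl
          intro i _; ring
      _ ≤ ∑ i ∈ B, t i := Finset.sum_le_sum hterm
  have hlowerA : (0:ℝ) ≤ ∑ i ∈ F \ B, t i :=
    Finset.sum_nonneg fun i hi => ht0 i (Finset.mem_sdiff.mp hi).1
  constructor
  · rw [hTau, hXi, hsplit]
    have hstep : (n : ℝ) * ξ - (n : ℝ) * (ξ ^ 2 / 2) ≤ ∑ i ∈ F \ B, t i + ∑ i ∈ B, t i := by
      linarith
    have hdiv := mul_le_mul_of_nonneg_left hstep (le_of_lt (one_div_pos.mpr hnR))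
    calc ξ - 1 / 2 * ξ ^ 2
        = (1 / (n : ℝ)) * ((n : ℝ) * ξ - (n : ℝ) * (ξ ^ 2 / 2)) := by
          field_simp
      _ ≤ (1 / (n : ℝ)) * (∑ i ∈ F \ B, t i + ∑ i ∈ B, t i) := hdiv
  · rw [hTau, hXi, hsplit]
    have hstep : ∑ i ∈ F \ B, t i + ∑ i ∈ B, t i ≤ (a : ℝ) + (n : ℝ) * ξ := by linarith
    have hdiv := mul_le_mul_of_nonneg_left hstep (le_of_lt (one_div_pos.mpr hnR))
    calc (1 / (n : ℝ)) * (∑ i ∈ F \ B, t i + ∑ i ∈ B, t i)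
        ≤ (1 / (n : ℝ)) * ((a : ℝ) + (n : ℝ) * ξ) := hdiv
      _ = (a : ℝ) / (n : ℝ) + ξ := by field_simp
      _ ≤ ξ + x / (n : ℝ) := by
          have hax2 : (a : ℝ) / (n : ℝ) ≤ x / (n : ℝ) := by gcongr
          linarith
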